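/- arXiv:2604.24132 — 7 statements merged into one kernel-verified Lean document; each statement's English description precedes it below -/
import Mathlib

section
/- For any graph G and independent sets I and J of G, there exists a sequence I = I_0, I_1, ..., I_ℓ = J of independent sets of G with ℓ equal to the number of connected components of G[I △ J], such that for each i the induced subgraph G[I_{i-1} △ I_i] is connected. (That is, flipping the connected components of the symmetric difference one by one gives a valid reconfiguration sequence of length cc(I △ J).) -/
/-- A set of vertices is independent: no two of its vertices are adjacent. -/
def IsIndep {V : Type*} (G : SimpleGraph V) (I : Set V) : Prop :=
  ∀ ⦃a⦄, a ∈ I → ∀ ⦃b⦄, b ∈ I → ¬ G.Adj a b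

/-- The number of connected components of the subgraph induced by `S`. -/
noncomputable def cc {V : Type*} (G : SimpleGraph V) (S : Set V) : ℕ :=
  Nat.card (G.induce S).ConnectedComponent

/-- Flipping the connected components of the symmetric difference one by one gives a valid
reconfiguration sequence of length `cc (I ∆ J)`. -/
theorem stmt_0 {V : Type*} [Fintype V] (G : SimpleGraph V) (I J : Set V)
    (hI : IsIndep G I) (hJ : IsIndep G J) :
    ∃ seq : ℕ → Set V,
      seq 0 = I ∧ seq (cc G (symmDiff I J)) = J ∧
      (∀ i ≤ cc G (symmDiff I J), IsIndep G (seq i)) ∧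
      (∀ i < cc G (symmDiff I J),
        (G.induce (symmDiff (seq i) (seq (i + 1)))).Connected) := by
  classical
  set D : Set V := symmDiff I J with hD
  set ℓ : ℕ := cc G D with hℓ
  haveI : Finite ((G.induce D).ConnectedComponent) := Quot.finite _
  obtain ⟨e⟩ : Nonempty ((G.induce D).ConnectedComponent ≃ Fin ℓ) :=
    ⟨Finite.equivFinOfCardEq rfl⟩
  -- index of a vertex of D
  set U : ℕ → Set V := fun i =>
    {x | ∃ h : x ∈ D, (e ((G.induce D).connectedComponentMk ⟨x, h⟩)).val < i} with hU
  set seq : ℕ → Set V := fun i => symmDiff I (U i) with hseq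
  -- basic facts
  have hUD : ∀ i, U i ⊆ D := by
    intro i x hx
    exact hx.1
  have memJ : ∀ {x}, x ∈ D → x ∉ I → x ∈ J := by
    intro x hx hxI
    rcases Set.mem_symmDiff.mp hx with ⟨h1, _⟩ | ⟨h1, _⟩
    · exact absurd h1 hxI
    · exact h1
  have memJ' : ∀ {x}, x ∉ D → x ∈ I → x ∈ J := by
    intro x hx hxI
    by_contra hxJ
    exact hx (Set.mem_symmDiff.mpr (Or.inl ⟨hxI, hxJ⟩))
  have sameComp : ∀ {a b : V} (ha : a ∈ D) (hb : b ∈ D), G.Adj a b →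
      (G.induce D).connectedComponentMk ⟨a, ha⟩ = (G.induce D).connectedComponentMk ⟨b, hb⟩ := by
    intro a b ha hb hadj
    exact SimpleGraph.ConnectedComponent.sound
      (SimpleGraph.Adj.reachable (show (G.induce D).Adj ⟨a, ha⟩ ⟨b, hb⟩ from hadj))
  refine ⟨seq, ?_, ?_, ?_, ?_⟩
  · -- seq 0 = I
    have : U 0 = (∅ : Set V) := by
      ext x; simp [hU]
    simp [hseq, this]
  · -- seq ℓ = J
    have : U ℓ = D := by
      ext x
      constructor
      · intro hx; exact hx.1
      · intro hx; exact ⟨hx, (e ((G.induce D).connectedComponentMk ⟨x, hx⟩)).isLt⟩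
    rw [hseq]
    simp only [this, hD]
    exact symmDiff_symmDiff_cancel_left I J
  · -- independence
    intro i _ a ha b hb hadj
    rcases Set.mem_symmDiff.mp ha with ⟨haI, haU⟩ | ⟨haU, haI⟩ <;>
      rcases Set.mem_symmDiff.mp hb with ⟨hbI, hbU⟩ | ⟨hbU, hbI⟩
    · exact hI haI hbI hadj
    · -- a ∈ I \ U, b ∈ U \ I
      obtain ⟨hbD, hbi⟩ := hbU
      have hbJ : b ∈ J := memJ hbD hbI
      by_cases haD : a ∈ D
      · have := sameComp haD hbD hadj
        exact haU ⟨haD, by rw [this]; exact hbi⟩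
      · exact hJ (memJ' haD haI) hbJ hadj
    · -- symmetric
      obtain ⟨haD, hai⟩ := haU
      have haJ : a ∈ J := memJ haD haI
      by_cases hbD : b ∈ D
      · have := sameComp haD hbD hadj
        exact hbU ⟨hbD, by rw [← this]; exact hai⟩
      · exact hJ haJ (memJ' hbD hbI) hadj
    · exact hJ (memJ haU.1 haI) (memJ hbU.1 hbI) hadj
  · -- connectivity of each step
    intro i hi
    set c : (G.induce D).ConnectedComponent := e.symm ⟨i, hi⟩ with hc
    set S : Set V := {x | ∃ h : x ∈ D, (G.induce D).connectedComponentMk ⟨x, h⟩ = c} with hS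
    have hstep : symmDiff (seq i) (seq (i + 1)) = S := by
      have h1 : symmDiff (seq i) (seq (i + 1)) = symmDiff (U i) (U (i + 1)) := by
        rw [hseq]
        simp only []
        rw [symmDiff_symmDiff_symmDiff_comm, symmDiff_self, bot_symmDiff]
      rw [h1]
      ext x
      simp only [Set.mem_symmDiff, hU, Set.mem_setOf_eq, hS]
      constructor
      · rintro (⟨⟨hxD, hlt⟩, hn⟩ | ⟨⟨hxD, hlt⟩, hn⟩)
        · exact absurd ⟨hxD, hlt.trans (Nat.lt_succ_self i)⟩ hn
        · refine ⟨hxD, ?_⟩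
          have : (e ((G.induce D).connectedComponentMk ⟨x, hxD⟩)).val = i := by
            have h2 : ¬ (e ((G.induce D).connectedComponentMk ⟨x, hxD⟩)).val < i := by
              intro h; exact hn ⟨hxD, h⟩
            omega
          rw [hc, Equiv.eq_symm_apply]
          exact Fin.ext this
      · rintro ⟨hxD, hcomp⟩
        right
        have hval : (e ((G.induce D).connectedComponentMk ⟨x, hxD⟩)).val = i := by
          rw [hcomp, hc, Equiv.apply_symm_apply]
        refine ⟨⟨hxD, by omega⟩, ?_⟩
        rintro ⟨hxD', hlt⟩
        have : (e ((G.induce D).connectedComponentMk ⟨x, hxD'⟩)).val = i := hval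
        omega
    rw [hstep]
    -- G.induce S is connected
    have key : ∀ {u v : ↥D} (p : (G.induce D).Walk u v) (hu : u.val ∈ S) (hv : v.val ∈ S),
        (G.induce S).Reachable ⟨u.val, hu⟩ ⟨v.val, hv⟩ := by
      intro u v p
      induction p with
      | nil => intro hu hv; exact SimpleGraph.Reachable.refl _
      | @cons u w v h p ih =>
        intro hu hv
        have hwS : w.val ∈ S := by
          obtain ⟨huD, hucomp⟩ := hu
          refine ⟨w.prop, ?_⟩
          have := sameComp huD w.prop (show G.Adj u.val w.val from h)
          rw [← this]
          have : (⟨u.val, huD⟩ : ↥D) = u := Subtype.ext rfl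
          rw [this] at *
          exact hucomp
        exact SimpleGraph.Reachable.trans
          (SimpleGraph.Adj.reachable (show (G.induce S).Adj ⟨u.val, hu⟩ ⟨w.val, hwS⟩ from h))
          (ih hwS hv)
    have hne : Nonempty ↥S := by
      obtain ⟨v, hv⟩ := c.exists_rep
      exact ⟨⟨v.val, v.prop, by rw [Subtype.coe_eta]; exact hv⟩⟩
    refine SimpleGraph.Connected.mk ?_
    · -- preconnected
      rintro ⟨x, hx⟩ ⟨y, hy⟩
      obtain ⟨hxD, hxc⟩ := hx
      obtain ⟨hyD, hyc⟩ := hy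
      have hreach : (G.induce D).Reachable ⟨x, hxD⟩ ⟨y, hyD⟩ :=
        SimpleGraph.ConnectedComponent.exact (hxc.trans hyc.symm)
      obtain ⟨p⟩ := hreach
      exact key p ⟨hxD, hxc⟩ ⟨hyD, hyc⟩
end

section
/- Let G be a bipartite graph with bipartition classes A and B, and let I_1, I_2 be independent sets of G such that G[I_1 △ I_2] is connected and nonempty. Then either (I_1 \ I_2 ⊆ A and I_2 \ I_1 ⊆ B) or (I_2 \ I_1 ⊆ A and I_1 \ I_2 ⊆ B). -/
set_option maxHeartbeats 1000000


/-- In a bipartite graph with classes `A, B`, if `I₁, I₂` are independent sets whose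
symmetric difference induces a connected nonempty subgraph, then the difference sets
`I₁ \ I₂` and `I₂ \ I₁` lie in opposite classes. -/
theorem stmt_3 {V : Type*} (G : SimpleGraph V) (A B : Set V)
    (hcover : A ∪ B = Set.univ) (hdisj : Disjoint A B)
    (hA : IsIndep G A) (hB : IsIndep G B)
    (I₁ I₂ : Set V) (h1 : IsIndep G I₁) (h2 : IsIndep G I₂)
    (hne : (symmDiff I₁ I₂).Nonempty)
    (hconn : (G.induce (symmDiff I₁ I₂)).Connected) :
    (I₁ \ I₂ ⊆ A ∧ I₂ \ I₁ ⊆ B) ∨ (I₂ \ I₁ ⊆ A ∧ I₁ \ I₂ ⊆ B) := by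
  set D := symmDiff I₁ I₂ with hD
  have hmem : ∀ v, v ∈ D ↔ (v ∈ I₁ ∧ v ∉ I₂) ∨ (v ∈ I₂ ∧ v ∉ I₁) := by
    intro v; rw [hD]; exact Set.mem_symmDiff
  have hcov : ∀ v : V, v ∈ A ∨ v ∈ B := by
    intro v
    have : v ∈ A ∪ B := by rw [hcover]; trivial
    exact this
  have hABdisj : ∀ v : V, ¬ (v ∈ A ∧ v ∈ B) := by
    intro v ⟨ha, hb⟩
    exact Set.disjoint_left.mp hdisj ha hb
  -- invariant along edges
  have key : ∀ u v : V, u ∈ D → v ∈ D → G.Adj u v →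
      ((u ∈ I₁ ↔ u ∈ A) ↔ (v ∈ I₁ ↔ v ∈ A)) := by
    intro u v hu hv hadj
    have h1' : ¬ (u ∈ I₁ ∧ v ∈ I₁) := fun ⟨a, b⟩ => h1 a b hadj
    have h2' : ¬ (u ∈ I₂ ∧ v ∈ I₂) := fun ⟨a, b⟩ => h2 a b hadj
    have hA' : ¬ (u ∈ A ∧ v ∈ A) := fun ⟨a, b⟩ => hA a b hadj
    have hB' : ¬ (u ∈ B ∧ v ∈ B) := fun ⟨a, b⟩ => hB a b hadj
    have hu' := (hmem u).mp hu
    have hv' := (hmem v).mp hv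
    have := hcov u
    have := hcov v
    have := hABdisj u
    have := hABdisj v
    tauto
  -- invariant along walks
  have reach : ∀ (u v : D), (G.induce D).Reachable u v →
      (((u : V) ∈ I₁ ↔ (u : V) ∈ A) ↔ ((v : V) ∈ I₁ ↔ (v : V) ∈ A)) := by
    intro u v ⟨w⟩
    induction w with
    | nil => rfl
    | cons h p ih =>
      rename_i a b c
      have hab : G.Adj (a : V) (b : V) := h
      exact (key (a : V) (b : V) a.2 b.2 hab).trans ih
  obtain ⟨v₀, hv₀⟩ := hne
  have main : ∀ x, x ∈ D →
      ((x ∈ I₁ ↔ x ∈ A) ↔ (v₀ ∈ I₁ ↔ v₀ ∈ A)) := by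
    intro x hx
    exact reach ⟨x, hx⟩ ⟨v₀, hv₀⟩ (hconn.preconnected _ _)
  by_cases hc : v₀ ∈ I₁ ↔ v₀ ∈ A
  · left
    constructor
    · intro x hx
      have hxD : x ∈ D := (hmem x).mpr (Or.inl ⟨hx.1, hx.2⟩)
      have := (main x hxD).mpr hc
      exact this.mp hx.1
    · intro x hx
      have hxD : x ∈ D := (hmem x).mpr (Or.inr ⟨hx.1, hx.2⟩)
      have hiff := (main x hxD).mpr hc
      have hxA : x ∉ A := fun h => hx.2 (hiff.mpr h)
      exact (hcov x).resolve_left hxA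
  · right
    constructor
    · intro x hx
      have hxD : x ∈ D := (hmem x).mpr (Or.inr ⟨hx.1, hx.2⟩)
      have hiff := main x hxD
      -- x ∉ I₁, need x ∈ A; if x ∉ A then (x∈I₁↔x∈A) holds, contradiction with hc
      by_contra hxA
      exact hc (hiff.mp ⟨fun h => absurd h hx.2, fun h => absurd h hxA⟩)
    · intro x hx
      have hxD : x ∈ D := (hmem x).mpr (Or.inl ⟨hx.1, hx.2⟩)
      have hiff := main x hxD
      have hxA : x ∉ A := fun h => hc (hiff.mp ⟨fun _ => h, fun _ => hx.1⟩)
      exact (hcov x).resolve_left hxA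
end

section
/- Let G = G_1 ⊗ G_2 be the join of two graphs, with V_1 = V(G_1) and V_2 = V(G_2). For any two independent sets I_s, I_t of G, there is a reconfiguration sequence from I_s to I_t of length at most 2; that is, either I_s = I_t, or G[I_s △ I_t] is connected, or there exists an independent set I_1 with both G[I_s △ I_1] and G[I_1 △ I_t] connected. -/
/-- The join `G₁ ⊗ G₂` of two graphs: keep the edges of each side and add all edges
between the two sides. -/
def graphJoin {V₁ V₂ : Type*} (G₁ : SimpleGraph V₁) (G₂ : SimpleGraph V₂) :
    SimpleGraph (V₁ ⊕ V₂) where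
  Adj x y :=
    match x, y with
    | .inl a, .inl b => G₁.Adj a b
    | .inr a, .inr b => G₂.Adj a b
    | .inl _, .inr _ => True
    | .inr _, .inl _ => True
  symm := by
    constructor
    rintro (a | a) (b | b) h
    · exact G₁.adj_symm h
    · trivial
    · trivial
    · exact G₂.adj_symm h
  loopless := by
    constructor
    rintro (a | a) h
    · exact G₁.loopless.irrefl a h
    · exact G₂.loopless.irrefl a h

/-! Every independent set of the join lies on one side, and any two vertices on opposite sides
are adjacent. Two independent sets on opposite sides, both nonempty, therefore span a connected
complete bipartite graph and are adjacent; two sets on the same side are both adjacent to the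
singleton of a vertex on the other side. The empty set lies on both sides, which disposes of
the opposite-side case with an empty set. -/

namespace SimpleGraph

variable {V : Type*} {H : SimpleGraph V}

lemma connected_induce_insert_of_forall_adj {X : Set V} {c : V} (h : ∀ x ∈ X, H.Adj x c) :
    (H.induce (insert c X)).Connected := by
  rw [connected_iff_exists_forall_reachable]
  refine ⟨⟨c, Set.mem_insert c X⟩, ?_⟩
  rintro ⟨v, rfl | hv⟩
  · rfl
  · exact (show (H.induce (insert c X)).Adj ⟨v, Set.mem_insert_of_mem c hv⟩
      ⟨c, Set.mem_insert c X⟩ from h v hv).reachable.symm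

lemma connected_induce_union_of_forall_adj {X Y : Set V} (hX : X.Nonempty) (hY : Y.Nonempty)
    (h : ∀ x ∈ X, ∀ y ∈ Y, H.Adj x y) : (H.induce (X ∪ Y)).Connected := by
  obtain ⟨a, ha⟩ := hX
  obtain ⟨b, hb⟩ := hY
  have hab : (H.induce (X ∪ Y)).Adj ⟨a, .inl ha⟩ ⟨b, .inr hb⟩ := h a ha b hb
  rw [connected_iff_exists_forall_reachable]
  refine ⟨⟨a, .inl ha⟩, ?_⟩
  rintro ⟨v, hv | hv⟩
  · exact hab.reachable.trans
      (show (H.induce (X ∪ Y)).Adj ⟨b, .inr hb⟩ ⟨v, .inl hv⟩ from (h v hv b hb).symm).reachable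
  · exact (show (H.induce (X ∪ Y)).Adj ⟨a, .inl ha⟩ ⟨v, .inr hv⟩ from h a ha v hv).reachable

lemma disjoint_of_forall_adj {X Y : Set V} (h : ∀ x ∈ X, ∀ y ∈ Y, H.Adj x y) : Disjoint X Y :=
  Set.disjoint_left.2 fun x hX hY => H.irrefl (h x hX x hY)

lemma connected_induce_symmDiff_singleton_of_forall_adj {X : Set V} {c : V}
    (h : ∀ x ∈ X, H.Adj x c) : (H.induce (symmDiff X {c})).Connected := by
  have hdisj : Disjoint X {c} :=
    disjoint_of_forall_adj fun x hx y hy => (Set.mem_singleton_iff.1 hy) ▸ h x hx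
  rw [hdisj.symmDiff_eq_sup]
  change (H.induce (X ∪ {c})).Connected
  rw [Set.union_singleton]
  exact connected_induce_insert_of_forall_adj h

lemma connected_induce_symmDiff_of_forall_adj {X Y : Set V} (hX : X.Nonempty) (hY : Y.Nonempty)
    (h : ∀ x ∈ X, ∀ y ∈ Y, H.Adj x y) : (H.induce (symmDiff X Y)).Connected := by
  rw [(disjoint_of_forall_adj h).symmDiff_eq_sup]
  exact connected_induce_union_of_forall_adj hX hY h

end SimpleGraph

open SimpleGraph

lemma isIndep_singleton {V : Type*} (H : SimpleGraph V) (c : V) : IsIndep H {c} := by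
  rintro a rfl b rfl
  exact H.irrefl

/-- A reconfiguration sequence of length at most two leads from `I` to `J`. -/
def ReconfigurableInTwoSteps {V : Type*} (H : SimpleGraph V) (I J : Set V) : Prop :=
  I = J ∨ (H.induce (symmDiff I J)).Connected ∨
    ∃ K : Set V, IsIndep H K ∧ (H.induce (symmDiff I K)).Connected ∧
      (H.induce (symmDiff K J)).Connected

namespace ReconfigurableInTwoSteps

variable {V : Type*} {H : SimpleGraph V} {I J : Set V}

lemma symm (h : ReconfigurableInTwoSteps H I J) : ReconfigurableInTwoSteps H J I := by
  rcases h with rfl | hIJ | ⟨K, hK, hIK, hKJ⟩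
  · exact .inl rfl
  · exact .inr (.inl (symmDiff_comm I J ▸ hIJ))
  · exact .inr (.inr ⟨K, hK, symmDiff_comm K J ▸ hKJ, symmDiff_comm I K ▸ hIK⟩)

lemma of_forall_adj (c : V) (hI : ∀ x ∈ I, H.Adj x c) (hJ : ∀ x ∈ J, H.Adj x c) :
    ReconfigurableInTwoSteps H I J := by
  refine .inr (.inr ⟨{c}, isIndep_singleton H c,
    connected_induce_symmDiff_singleton_of_forall_adj hI, ?_⟩)
  rw [symmDiff_comm]
  exact connected_induce_symmDiff_singleton_of_forall_adj hJ

lemma of_forall_adj_of_subset {A B : Set V} (hA : A.Nonempty) (hB : B.Nonempty)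
    (hAB : ∀ a ∈ A, ∀ b ∈ B, H.Adj a b) (hI : I ⊆ A ∨ I ⊆ B) (hJ : J ⊆ A ∨ J ⊆ B) :
    ReconfigurableInTwoSteps H I J := by
  obtain ⟨a, ha⟩ := hA
  obtain ⟨b, hb⟩ := hB
  have viaB {I J : Set V} (hI : I ⊆ A) (hJ : J ⊆ A) : ReconfigurableInTwoSteps H I J :=
    of_forall_adj b (fun x hx => hAB x (hI hx) b hb) (fun x hx => hAB x (hJ hx) b hb)
  have viaA {I J : Set V} (hI : I ⊆ B) (hJ : J ⊆ B) : ReconfigurableInTwoSteps H I J :=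
    of_forall_adj a (fun x hx => (hAB a ha x (hI hx)).symm) (fun x hx => (hAB a ha x (hJ hx)).symm)
  have across {I J : Set V} (hI : I ⊆ A) (hJ : J ⊆ B) : ReconfigurableInTwoSteps H I J := by
    rcases I.eq_empty_or_nonempty with rfl | hIne
    · exact viaA (Set.empty_subset B) hJ
    rcases J.eq_empty_or_nonempty with rfl | hJne
    · exact viaB hI (Set.empty_subset A)
    exact .inr (.inl (connected_induce_symmDiff_of_forall_adj hIne hJne
      fun x hx y hy => hAB x (hI hx) y (hJ hy)))
  rcases hI with hI | hI <;> rcases hJ with hJ | hJ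
  · exact viaB hI hJ
  · exact across hI hJ
  · exact (across hJ hI).symm
  · exact viaA hI hJ

end ReconfigurableInTwoSteps

section Join

variable {V₁ V₂ : Type*} {G₁ : SimpleGraph V₁} {G₂ : SimpleGraph V₂}

lemma graphJoin_adj_of_mem_range {x y : V₁ ⊕ V₂} (hx : x ∈ Set.range Sum.inl)
    (hy : y ∈ Set.range Sum.inr) : (graphJoin G₁ G₂).Adj x y := by
  obtain ⟨u, rfl⟩ := hx
  obtain ⟨v, rfl⟩ := hy
  trivial

lemma IsIndep.subset_range_inl_or_subset_range_inr {I : Set (V₁ ⊕ V₂)}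
    (hI : IsIndep (graphJoin G₁ G₂) I) : I ⊆ Set.range Sum.inl ∨ I ⊆ Set.range Sum.inr := by
  rw [or_iff_not_imp_right, Set.not_subset]
  rintro ⟨u | v, hxI, hx⟩ (u' | v') hyI
  · exact ⟨u', rfl⟩
  · exact (hI hxI hyI trivial).elim
  all_goals exact (hx ⟨v, rfl⟩).elim

end Join

/-- In a join with both sides nonempty, any two independent sets can be reconfigured into
each other in at most 2 steps. -/
theorem stmt_6 {V₁ V₂ : Type*} [Nonempty V₁] [Nonempty V₂]
    (G₁ : SimpleGraph V₁) (G₂ : SimpleGraph V₂)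
    (I_s I_t : Set (V₁ ⊕ V₂))
    (hs : IsIndep (graphJoin G₁ G₂) I_s) (ht : IsIndep (graphJoin G₁ G₂) I_t) :
    I_s = I_t ∨ ((graphJoin G₁ G₂).induce (symmDiff I_s I_t)).Connected ∨
      ∃ I₁ : Set (V₁ ⊕ V₂), IsIndep (graphJoin G₁ G₂) I₁ ∧
        ((graphJoin G₁ G₂).induce (symmDiff I_s I₁)).Connected ∧
        ((graphJoin G₁ G₂).induce (symmDiff I₁ I_t)).Connected :=
  ReconfigurableInTwoSteps.of_forall_adj_of_subset (Set.range_nonempty Sum.inl)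
    (Set.range_nonempty Sum.inr) (fun _ hx _ hy => graphJoin_adj_of_mem_range hx hy)
    hs.subset_range_inl_or_subset_range_inr ht.subset_range_inl_or_subset_range_inr
end

section
/- Let G be a path or cycle graph and I_s, I_t independent sets of G. Then every reconfiguration sequence from I_s to I_t (a sequence of independent sets in which each consecutive pair has connected induced symmetric difference) has length at least cc(I_s △ I_t), and there exists such a sequence of length exactly cc(I_s △ I_t). -/
/-!
Toggling a connected set `D` raises the number of components by at most one, so after `ℓ` steps
`I_s ∆ I_t` has at most `ℓ` components. Conversely, toggling the components of `I_s ∆ I_t` one at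
a time keeps the set independent, since no edge joins two of them.

On a cycle, let `∂S` be the set of edges with exactly one end in `S`. Then `∂(X ∆ D) = ∂X ∆ ∂D`,
and a proper subset `S` has `|∂S| = 2 cc(S)`, each component being an arc. Hence
`2 cc(X ∆ D) ≤ |∂X| + |∂D| ≤ 2 cc(X) + 2`. A path on `n + 1` vertices is an induced subgraph of the
cycle on `n + 2` vertices.
-/

open SimpleGraph Finset
open scoped symmDiff

section Reconfiguration

variable {V : Type*} {G : SimpleGraph V}

lemma cc_empty : cc G ∅ = 0 := by
  simp [cc]

lemma cc_eq_one_of_connected {S : Set V} (h : (G.induce S).Connected) : cc G S = 1 :=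
  Nat.card_eq_one_iff_unique.2
    ⟨h.preconnected.subsingleton_connectedComponent,
      h.nonempty.map (G.induce S).connectedComponentMk⟩

lemma cc_le_card [Finite V] (S : Set V) : cc G S ≤ Nat.card V :=
  (Nat.card_le_card_of_surjective _ Quot.mk_surjective).trans
    (Nat.card_le_card_of_injective _ Subtype.val_injective)

lemma cc_symmDiff_le_of_connected_steps
    (hstep : ∀ X D : Set V, (G.induce D).Connected → cc G (X ∆ D) ≤ cc G X + 1)
    (seq : ℕ → Set V) (ℓ : ℕ) (hconn : ∀ i < ℓ, (G.induce (seq i ∆ seq (i + 1))).Connected) :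
    cc G (seq 0 ∆ seq ℓ) ≤ ℓ := by
  induction ℓ with
  | zero => simp [cc_empty]
  | succ ℓ ih =>
    have hsplit : seq 0 ∆ seq (ℓ + 1) = seq 0 ∆ seq ℓ ∆ (seq ℓ ∆ seq (ℓ + 1)) := by
      rw [symmDiff_assoc, symmDiff_symmDiff_cancel_left]
    rw [hsplit]
    exact (hstep _ _ (hconn ℓ ℓ.lt_succ_self)).trans
      (Nat.add_le_add_right (ih fun i hi => hconn i (by omega)) 1)

lemma IsIndep.symmDiff_of_subset_closed {I J U : Set V} (hI : IsIndep G I) (hJ : IsIndep G J)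
    (hU : U ⊆ I ∆ J) (hclosed : ∀ ⦃u v⦄, u ∈ U → v ∈ I ∆ J → G.Adj u v → v ∈ U) :
    IsIndep G (I ∆ U) := by
  have hUJ : ∀ v ∈ U, v ∉ I → v ∈ J := fun v hv hvI => by
    have := hU hv
    simp_all [Set.mem_symmDiff]
  have hmixed : ∀ ⦃u v⦄, u ∈ U → u ∉ I → v ∈ I → v ∉ U → ¬ G.Adj u v := by
    intro u v hu huI hvI hvU huv
    by_cases hvJ : v ∈ J
    · exact hJ (hUJ u hu huI) hvJ huv
    · exact hvU (hclosed hu (Or.inl ⟨hvI, hvJ⟩) huv)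
  intro a ha b hb hab
  rw [Set.mem_symmDiff] at ha hb
  rcases ha with ⟨haI, haU⟩ | ⟨haU, haI⟩ <;> rcases hb with ⟨hbI, hbU⟩ | ⟨hbU, hbI⟩
  · exact hI haI hbI hab
  · exact hmixed hbU hbI haI haU hab.symm
  · exact hmixed haU haI hbI hbU hab
  · exact hJ (hUJ a haU haI) (hUJ b hbU hbI) hab

lemma connected_induce_image_supp {X : Set V} (C : (G.induce X).ConnectedComponent) :
    (G.induce (Subtype.val '' C.supp)).Connected :=
  C.connected_toSimpleGraph.map
    { toFun := fun x => ⟨x.1.1, x.1, x.2, rfl⟩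
      map_rel' := fun h => h }
    (by rintro ⟨_, x, hx, rfl⟩; exact ⟨⟨x, hx⟩, rfl⟩)

theorem exists_reconfiguration_of_length_cc [Finite V] {I J : Set V} (hI : IsIndep G I)
    (hJ : IsIndep G J) :
    ∃ seq : ℕ → Set V, seq 0 = I ∧ seq (cc G (I ∆ J)) = J ∧
      (∀ i ≤ cc G (I ∆ J), IsIndep G (seq i)) ∧
      (∀ i < cc G (I ∆ J), (G.induce (seq i ∆ seq (i + 1))).Connected) := by
  set X := I ∆ J
  let e : (G.induce X).ConnectedComponent ≃ Fin (cc G X) := Finite.equivFin _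
  let A : ℕ → Set X := fun j => {x | (e ((G.induce X).connectedComponentMk x) : ℕ) < j}
  refine ⟨fun j => I ∆ (Subtype.val '' A j), ?_, ?_, fun j _ => ?_, fun j hj => ?_⟩
  · simp [A]
  · have hA : A (cc G X) = Set.univ := Set.eq_univ_of_forall fun x => (e _).isLt
    simp only [hA, Set.image_univ, Subtype.range_coe]
    exact symmDiff_symmDiff_cancel_left I J
  · refine hI.symmDiff_of_subset_closed hJ (Subtype.coe_image_subset _ _) ?_
    rintro _ v ⟨u, hu, rfl⟩ hv huv
    refine ⟨⟨v, hv⟩, ?_, rfl⟩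
    have hadj : (G.induce X).Adj u ⟨v, hv⟩ := huv
    simpa [A, ← ConnectedComponent.connectedComponentMk_eq_of_adj hadj] using hu
  · have hstep : A j ∆ A (j + 1) = (e.symm ⟨j, hj⟩).supp := by
      ext x
      simp only [Set.mem_symmDiff, A, Set.mem_ofPred_eq, ConnectedComponent.mem_supp_iff,
        Equiv.eq_symm_apply, Fin.ext_iff]
      omega
    rw [symmDiff_symmDiff_symmDiff_comm, symmDiff_self, bot_symmDiff,
      ← Set.image_symmDiff Subtype.val_injective, hstep]
    exact connected_induce_image_supp _

end Reconfiguration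

section Cycle

variable {n : ℕ}

open Classical in
noncomputable def leftEnds [NeZero n] (S : Set (Fin n)) : Finset (Fin n) :=
  {v | v ∈ S ∧ v - 1 ∉ S}

open Classical in
/-- The edge boundary of `S` in the cycle, the vertex `v` standing for the edge `{v - 1, v}`. -/
noncomputable def cycleBoundary [NeZero n] (S : Set (Fin n)) : Finset (Fin n) :=
  {v | ¬(v ∈ S ↔ v - 1 ∈ S)}

lemma mem_leftEnds [NeZero n] {S : Set (Fin n)} {v : Fin n} :
    v ∈ leftEnds S ↔ v ∈ S ∧ v - 1 ∉ S := by
  simp [leftEnds]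

lemma mem_cycleBoundary [NeZero n] {S : Set (Fin n)} {v : Fin n} :
    v ∈ cycleBoundary S ↔ ¬(v ∈ S ↔ v - 1 ∈ S) := by
  simp [cycleBoundary]

lemma cycleBoundary_symmDiff [NeZero n] (X Y : Set (Fin n)) :
    cycleBoundary (X ∆ Y) = cycleBoundary X ∆ cycleBoundary Y := by
  ext v
  simp only [mem_cycleBoundary, Finset.mem_symmDiff, Set.mem_symmDiff]
  tauto

lemma card_leftEnds_compl [NeZero n] (S : Set (Fin n)) : #(leftEnds Sᶜ) = #(leftEnds S) := by
  classical
  have hshift :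
      ∑ v : Fin n, (if v - 1 ∈ S then 1 else 0) = ∑ v : Fin n, (if v ∈ S then 1 else 0) :=
    Equiv.sum_comp (Equiv.subRight 1) (fun v => if v ∈ S then 1 else 0)
  have hpoint : ∀ v : Fin n,
      (if v ∈ Sᶜ ∧ v - 1 ∉ Sᶜ then 1 else 0) + (if v ∈ S then 1 else 0) =
        (if v ∈ S ∧ v - 1 ∉ S then 1 else 0) + (if v - 1 ∈ S then 1 else 0) := by
    intro v
    by_cases h : v ∈ S <;> by_cases h' : v - 1 ∈ S <;> simp [h, h']
  have hsum := Finset.sum_congr rfl fun v (_ : v ∈ Finset.univ) => hpoint v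
  simp only [Finset.sum_add_distrib, hshift] at hsum
  simp only [leftEnds, Finset.card_filter]
  convert Nat.add_right_cancel hsum

lemma card_cycleBoundary [NeZero n] (S : Set (Fin n)) :
    #(cycleBoundary S) = 2 * #(leftEnds S) := by
  have hunion : cycleBoundary S = leftEnds S ∪ leftEnds Sᶜ := by
    ext v
    simp only [mem_cycleBoundary, Finset.mem_union, mem_leftEnds, Set.mem_compl_iff]
    tauto
  have hdisj : Disjoint (leftEnds S) (leftEnds Sᶜ) :=
    Finset.disjoint_left.2 fun v hv hv' => (mem_leftEnds.1 hv').1 (mem_leftEnds.1 hv).1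
  rw [hunion, Finset.card_union_of_disjoint hdisj, card_leftEnds_compl]
  ring

lemma cycleGraph_adj_iff_eq_add_one {u v : Fin (n + 2)} :
    (cycleGraph (n + 2)).Adj u v ↔ v = u + 1 ∨ u = v + 1 := by
  rw [cycleGraph_adj, sub_eq_iff_eq_add', sub_eq_iff_eq_add', or_comm]

/-- Away from a fixed vertex `w`, the cycle is a path, with `(· - w).val` as coordinate. -/
lemma val_sub_of_cycleGraph_adj {u v w : Fin (n + 2)} (h : (cycleGraph (n + 2)).Adj u v)
    (hu : u ≠ w) (hv : v ≠ w) :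
    (v - w).val = (u - w).val + 1 ∨ (u - w).val = (v - w).val + 1 := by
  have hsucc : ∀ a b : Fin (n + 2), b = a + 1 → b ≠ w → (b - w).val = (a - w).val + 1 := by
    rintro a b rfl hb
    have hshift : a + 1 - w = a - w + 1 := add_sub_right_comm a 1 w
    have hlast : a - w ≠ Fin.last _ := fun hl =>
      hb (sub_eq_zero.1 (by rw [hshift, hl, Fin.last_add_one]))
    rw [hshift, Fin.val_add_one_of_lt (Fin.lt_last_iff_ne_last.2 hlast)]
  rcases cycleGraph_adj_iff_eq_add_one.1 h with h | h
  · exact Or.inl (hsucc u v h hv)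
  · exact Or.inr (hsucc v u h hu)

lemma exists_val_sub_eq_of_walk {S : Set (Fin (n + 2))} {w : Fin (n + 2)} (hw : w ∉ S) {x y : S}
    (p : ((cycleGraph (n + 2)).induce S).Walk x y) {k : ℕ} (hxk : (x.1 - w).val ≤ k)
    (hky : k < (y.1 - w).val) : ∃ z ∈ S, (z - w).val = k := by
  obtain ⟨d, -, hd, hd'⟩ := p.exists_boundary_dart {z | (z.1 - w).val ≤ k} hxk (not_le.2 hky)
  have hadj : (cycleGraph (n + 2)).Adj d.fst.1 d.snd.1 := d.adj
  have := val_sub_of_cycleGraph_adj hadj (ne_of_mem_of_not_mem d.fst.2 hw)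
    (ne_of_mem_of_not_mem d.snd.2 hw)
  simp only [Set.mem_ofPred_eq, not_le] at hd hd'
  exact ⟨d.fst.1, d.fst.2, by omega⟩

lemma exists_mem_leftEnds_reachable {S : Set (Fin (n + 2))} {w : Fin (n + 2)} (hw : w ∉ S)
    (x : S) : ∃ v, ∃ hv : v ∈ leftEnds S,
      ((cycleGraph (n + 2)).induce S).Reachable ⟨v, (mem_leftEnds.1 hv).1⟩ x := by
  by_cases hx : x.1 - 1 ∈ S
  · obtain ⟨v, hv, hr⟩ := exists_mem_leftEnds_reachable hw ⟨x.1 - 1, hx⟩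
    have hadj : ((cycleGraph (n + 2)).induce S).Adj ⟨x.1 - 1, hx⟩ x :=
      cycleGraph_adj_iff_eq_add_one.2 (Or.inl (sub_add_cancel x.1 1).symm)
    exact ⟨v, hv, hr.trans hadj.reachable⟩
  · exact ⟨x, mem_leftEnds.2 ⟨x.2, hx⟩, .rfl⟩
termination_by (x.1 - w).val
decreasing_by
  have hxw : x.1 - w ≠ 0 := sub_ne_zero.2 (ne_of_mem_of_not_mem x.2 hw)
  rw [sub_right_comm, Fin.val_sub_one_of_ne_zero hxw]
  exact Nat.sub_lt (Nat.pos_of_ne_zero (Fin.val_ne_of_ne hxw)) one_pos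

lemma eq_of_reachable_of_mem_leftEnds {S : Set (Fin (n + 2))} {u v : S} (hu : u.1 ∈ leftEnds S)
    (hv : v.1 ∈ leftEnds S) (h : ((cycleGraph (n + 2)).induce S).Reachable u v) : u = v := by
  by_contra hne
  set w := u.1 - 1
  have hw : w ∉ S := (mem_leftEnds.1 hu).2
  have huw : (u.1 - w).val = 1 := by rw [sub_sub_cancel, Fin.val_one]
  have hvw : v.1 - w ≠ 0 := sub_ne_zero.2 (ne_of_mem_of_not_mem v.2 hw)
  have hvw0 : (v.1 - w).val ≠ 0 := Fin.val_ne_zero_iff.2 hvw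
  have hvw1 : (v.1 - w).val ≠ 1 := fun h1 =>
    hne (Subtype.ext (sub_left_inj.1 (Fin.ext (by rw [huw, h1]))).symm)
  -- a walk from `u` to `v` inside `S` would have to pass through `v - 1 ∉ S`
  obtain ⟨p⟩ := h
  obtain ⟨z, hz, hzv⟩ :=
    exists_val_sub_eq_of_walk hw p (k := (v.1 - w).val - 1) (by omega) (by omega)
  have hz' : z = v.1 - 1 := sub_left_inj.1 (Fin.ext (by
    rw [hzv, sub_right_comm, Fin.val_sub_one_of_ne_zero hvw]))
  exact (mem_leftEnds.1 hv).2 (hz' ▸ hz)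

lemma cc_cycleGraph_eq_card_leftEnds {S : Set (Fin (n + 2))} (hS : S ≠ Set.univ) :
    cc (cycleGraph (n + 2)) S = #(leftEnds S) := by
  obtain ⟨w, hw⟩ := (Set.ne_univ_iff_exists_notMem S).1 hS
  let f : leftEnds S → ((cycleGraph (n + 2)).induce S).ConnectedComponent :=
    fun v => connectedComponentMk _ ⟨v.1, (mem_leftEnds.1 v.2).1⟩
  have hf : f.Bijective := by
    refine ⟨fun u v huv => ?_, fun c => c.ind fun x => ?_⟩
    · have := eq_of_reachable_of_mem_leftEnds (S := S) (u := ⟨u.1, _⟩) (v := ⟨v.1, _⟩) u.2 v.2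
        (ConnectedComponent.exact huv)
      exact Subtype.ext (Subtype.mk.inj this)
    · obtain ⟨v, hv, hr⟩ := exists_mem_leftEnds_reachable hw x
      exact ⟨⟨v, hv⟩, ConnectedComponent.sound hr⟩
  rw [cc, ← Nat.card_eq_of_bijective f hf, Nat.card_eq_finsetCard]

lemma card_cycleBoundary_le_cc (S : Set (Fin (n + 2))) :
    #(cycleBoundary S) ≤ 2 * cc (cycleGraph (n + 2)) S := by
  by_cases hS : S = Set.univ
  · simp [hS, cycleBoundary]
  · rw [card_cycleBoundary, cc_cycleGraph_eq_card_leftEnds hS]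

lemma cc_cycleGraph_symmDiff_le {X D : Set (Fin (n + 2))}
    (hD : ((cycleGraph (n + 2)).induce D).Connected) :
    cc (cycleGraph (n + 2)) (X ∆ D) ≤ cc (cycleGraph (n + 2)) X + 1 := by
  by_cases hXD : X ∆ D = Set.univ
  · rw [hXD, cc_eq_one_of_connected ((induceUnivIso _).connected_iff.2 cycleGraph_connected)]
    omega
  · have := calc
      2 * cc (cycleGraph (n + 2)) (X ∆ D) = #(cycleBoundary X ∆ cycleBoundary D) := by
        rw [← cycleBoundary_symmDiff, card_cycleBoundary, cc_cycleGraph_eq_card_leftEnds hXD]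
      _ ≤ #(cycleBoundary X) + #(cycleBoundary D) :=
        (Finset.card_le_card Finset.symmDiff_subset_union).trans (Finset.card_union_le _ _)
      _ ≤ 2 * cc (cycleGraph (n + 2)) X + 2 * cc (cycleGraph (n + 2)) D :=
        add_le_add (card_cycleBoundary_le_cc X) (card_cycleBoundary_le_cc D)
      _ = 2 * cc (cycleGraph (n + 2)) X + 2 := by rw [cc_eq_one_of_connected hD]
    omega

lemma pathGraph_adj_iff_cycleGraph_adj_castSucc {u v : Fin (n + 1)} :
    (pathGraph (n + 1)).Adj u v ↔ (cycleGraph (n + 2)).Adj u.castSucc v.castSucc := by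
  rw [pathGraph_adj, cycleGraph_adj_iff_eq_add_one, Fin.coeSucc_eq_succ, Fin.coeSucc_eq_succ,
    Fin.ext_iff, Fin.ext_iff]
  simp only [Fin.val_castSucc, Fin.val_succ]
  omega

noncomputable def inducePathGraphIsoCycleGraph (S : Set (Fin (n + 1))) :
    (pathGraph (n + 1)).induce S ≃g (cycleGraph (n + 2)).induce (Fin.castSucc '' S) where
  toEquiv := Equiv.Set.image Fin.castSucc S (Fin.castSucc_injective _)
  map_rel_iff' := pathGraph_adj_iff_cycleGraph_adj_castSucc.symm

lemma cc_pathGraph_symmDiff_le {X D : Set (Fin (n + 1))}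
    (hD : ((pathGraph (n + 1)).induce D).Connected) :
    cc (pathGraph (n + 1)) (X ∆ D) ≤ cc (pathGraph (n + 1)) X + 1 := by
  have hcc : ∀ S, cc (pathGraph (n + 1)) S = cc (cycleGraph (n + 2)) (Fin.castSucc '' S) :=
    fun S => Nat.card_congr (inducePathGraphIsoCycleGraph S).connectedComponentEquiv
  rw [hcc, hcc, Set.image_symmDiff (Fin.castSucc_injective _)]
  exact cc_cycleGraph_symmDiff_le ((inducePathGraphIsoCycleGraph D).connected_iff.1 hD)

end Cycle

lemma cc_symmDiff_le_of_pathGraph_or_cycleGraph {n : ℕ} {G : SimpleGraph (Fin n)}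
    (hG : G = pathGraph n ∨ G = cycleGraph n) {X D : Set (Fin n)} (hD : (G.induce D).Connected) :
    cc G (X ∆ D) ≤ cc G X + 1 := by
  rcases hG with rfl | rfl
  · cases n with
    | zero => exact (cc_le_card _).trans (by simp)
    | succ n => exact cc_pathGraph_symmDiff_le hD
  · obtain _ | _ | n := n
    · exact (cc_le_card _).trans (by simp)
    · exact (cc_le_card _).trans (by simp)
    · exact cc_cycleGraph_symmDiff_le hD

/-- On a path or a cycle, every reconfiguration sequence from `I_s` to `I_t` has length at
least `cc(I_s ∆ I_t)`, and there is one of exactly this length. -/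
theorem stmt_9 {n : ℕ} (G : SimpleGraph (Fin n))
    (hG : G = SimpleGraph.pathGraph n ∨ G = SimpleGraph.cycleGraph n)
    (I_s I_t : Set (Fin n)) (hs : IsIndep G I_s) (ht : IsIndep G I_t) :
    (∀ (ℓ : ℕ) (seq : ℕ → Set (Fin n)),
        seq 0 = I_s → seq ℓ = I_t →
        (∀ i ≤ ℓ, IsIndep G (seq i)) →
        (∀ i < ℓ, (G.induce (symmDiff (seq i) (seq (i + 1)))).Connected) →
        cc G (symmDiff I_s I_t) ≤ ℓ) ∧
    (∃ seq : ℕ → Set (Fin n),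
        seq 0 = I_s ∧ seq (cc G (symmDiff I_s I_t)) = I_t ∧
        (∀ i ≤ cc G (symmDiff I_s I_t), IsIndep G (seq i)) ∧
        (∀ i < cc G (symmDiff I_s I_t),
          (G.induce (symmDiff (seq i) (seq (i + 1)))).Connected)) := by
  refine ⟨fun ℓ seq h0 hℓ _ hconn => ?_, exists_reconfiguration_of_length_cc hs ht⟩
  subst h0 hℓ
  exact cc_symmDiff_le_of_connected_steps
    (fun _ _ hD => cc_symmDiff_le_of_pathGraph_or_cycleGraph hG hD) seq ℓ hconn
end

section
/- Let G be a connected bipartite chain graph with classes A, B (ordered by neighborhood inclusion, maxima a_{n_A} ∈ A and b_{n_B} ∈ B), and let I_s, I_t be any independent sets of G. Define S = {a_{n_A}} ∪ (I_s ∩ A) and T = {b_{n_B}} ∪ (I_t ∩ B). Then S and T are independent sets, and each of G[I_s △ S], G[S △ T], G[T △ I_t] is connected or empty; hence there is a reconfiguration sequence of length at most 3 from I_s to I_t. -/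
/-- A "double star" is connected: if `c, d ∈ D` are equal or adjacent and every vertex
of `D` equals or is adjacent to `c` or `d`, then the induced graph on `D` is connected. -/
lemma twoStar_connected {V : Type*} (G : SimpleGraph V) (D : Set V) (c d : V)
    (hc : c ∈ D) (hd : d ∈ D) (hcd : c = d ∨ G.Adj c d)
    (h : ∀ x ∈ D, x = c ∨ x = d ∨ G.Adj x c ∨ G.Adj x d) :
    (G.induce D).Connected := by
  rw [SimpleGraph.connected_iff]
  have hdc : (G.induce D).Reachable ⟨d, hd⟩ ⟨c, hc⟩ := by
    rcases hcd with rfl | hadj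
    · exact SimpleGraph.Reachable.refl _
    · exact SimpleGraph.Adj.reachable (by exact hadj.symm)
  have key : ∀ x : D, (G.induce D).Reachable x ⟨c, hc⟩ := by
    rintro ⟨x, hx⟩
    rcases h x hx with rfl | rfl | ha | ha
    · exact SimpleGraph.Reachable.refl _
    · exact hdc
    · exact SimpleGraph.Adj.reachable (by exact ha)
    · exact (SimpleGraph.Adj.reachable (by exact ha : (G.induce D).Adj ⟨x, hx⟩ ⟨d, hd⟩)).trans hdc
  exact ⟨fun u v => (key u).trans (key v).symm, ⟨⟨c, hc⟩⟩⟩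

/-- In a connected bipartite chain graph, for any independent sets `I_s, I_t`, the sets
`S = {aMax} ∪ (I_s ∩ A)` and `T = {bMax} ∪ (I_t ∩ B)` are independent and each of
`G[I_s ∆ S]`, `G[S ∆ T]`, `G[T ∆ I_t]` is connected or empty; hence there is a
reconfiguration sequence of length at most 3 from `I_s` to `I_t`. -/
theorem stmt_13 {V : Type*} (G : SimpleGraph V) (A B : Set V)
    (hcover : A ∪ B = Set.univ) (hdisj : Disjoint A B)
    (hA : IsIndep G A) (hB : IsIndep G B)
    (hAne : A.Nonempty) (hBne : B.Nonempty)
    (hchainA : ∀ a₁ ∈ A, ∀ a₂ ∈ A,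
      G.neighborSet a₁ ⊆ G.neighborSet a₂ ∨ G.neighborSet a₂ ⊆ G.neighborSet a₁)
    (hchainB : ∀ b₁ ∈ B, ∀ b₂ ∈ B,
      G.neighborSet b₁ ⊆ G.neighborSet b₂ ∨ G.neighborSet b₂ ⊆ G.neighborSet b₁)
    (aMax : V) (haMax : aMax ∈ A)
    (haMaxTop : ∀ a ∈ A, G.neighborSet a ⊆ G.neighborSet aMax)
    (bMax : V) (hbMax : bMax ∈ B)
    (hbMaxTop : ∀ b ∈ B, G.neighborSet b ⊆ G.neighborSet bMax)
    (hconn : G.Connected)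
    (I_s I_t : Set V) (hs : IsIndep G I_s) (ht : IsIndep G I_t) :
    IsIndep G ({aMax} ∪ (I_s ∩ A)) ∧ IsIndep G ({bMax} ∪ (I_t ∩ B)) ∧
    (symmDiff I_s ({aMax} ∪ (I_s ∩ A)) = ∅ ∨
      (G.induce (symmDiff I_s ({aMax} ∪ (I_s ∩ A)))).Connected) ∧
    (symmDiff ({aMax} ∪ (I_s ∩ A)) ({bMax} ∪ (I_t ∩ B)) = ∅ ∨
      (G.induce (symmDiff ({aMax} ∪ (I_s ∩ A)) ({bMax} ∪ (I_t ∩ B)))).Connected) ∧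
    (symmDiff ({bMax} ∪ (I_t ∩ B)) I_t = ∅ ∨
      (G.induce (symmDiff ({bMax} ∪ (I_t ∩ B)) I_t)).Connected) ∧
    ∃ (ℓ : ℕ) (seq : ℕ → Set V), ℓ ≤ 3 ∧ seq 0 = I_s ∧ seq ℓ = I_t ∧
      (∀ i ≤ ℓ, IsIndep G (seq i)) ∧
      (∀ i < ℓ, (G.induce (symmDiff (seq i) (seq (i + 1)))).Connected) := by
  set S : Set V := {aMax} ∪ (I_s ∩ A) with hS
  set T : Set V := {bMax} ∪ (I_t ∩ B) with hT
  have hcoverx : ∀ x : V, x ∈ A ∨ x ∈ B := by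
    intro x
    have : x ∈ A ∪ B := hcover ▸ Set.mem_univ x
    exact this
  have hne : ∀ a ∈ A, ∀ b ∈ B, a ≠ b := by
    intro a ha b hb h
    exact Set.disjoint_left.mp hdisj ha (h ▸ hb)
  -- every vertex has a neighbor
  have hnb : ∀ v : V, ∃ w, G.Adj v w := by
    intro v
    obtain ⟨u, hune⟩ : ∃ u, u ≠ v := by
      rcases hcoverx v with hv | hv
      · exact ⟨hBne.choose, fun h => hne v hv _ hBne.choose_spec h.symm⟩
      · exact ⟨hAne.choose, hne _ hAne.choose_spec v hv⟩
    obtain ⟨w⟩ := hconn.preconnected v u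
    cases w with
    | nil => exact absurd rfl hune.symm
    | cons h p => exact ⟨_, h⟩
  have hSA : S ⊆ A := by
    intro x hx
    rcases hx with hx | hx
    · exact (Set.mem_singleton_iff.mp hx) ▸ haMax
    · exact hx.2
  have hTB : T ⊆ B := by
    intro x hx
    rcases hx with hx | hx
    · exact (Set.mem_singleton_iff.mp hx) ▸ hbMax
    · exact hx.2
  -- aMax is adjacent to all of B, bMax to all of A
  have haAdj : ∀ b ∈ B, G.Adj aMax b := by
    intro b hb
    obtain ⟨w, hw⟩ := hnb b
    rcases hcoverx w with hwA | hwB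
    · exact haMaxTop w hwA hw.symm
    · exact absurd hw (hB hb hwB)
  have hbAdj : ∀ a ∈ A, G.Adj bMax a := by
    intro a ha
    obtain ⟨w, hw⟩ := hnb a
    rcases hcoverx w with hwA | hwB
    · exact absurd hw (hA ha hwA)
    · exact hbMaxTop w hwB hw.symm
  have hSindep : IsIndep G S := fun a ha b hb => hA (hSA ha) (hSA hb)
  have hTindep : IsIndep G T := fun a ha b hb => hB (hTB ha) (hTB hb)
  -- if aMax ∈ I_s then S = I_s
  have hSeq : aMax ∈ I_s → S = I_s := by
    intro h
    have hIsA : I_s ⊆ A := by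
      intro x hx
      rcases hcoverx x with hxA | hxB
      · exact hxA
      · exact absurd (haAdj x hxB) (hs h hx)
    ext x
    constructor
    · rintro (hx | hx)
      · exact (Set.mem_singleton_iff.mp hx) ▸ h
      · exact hx.1
    · intro hx
      exact Or.inr ⟨hx, hIsA hx⟩
  have hTeq : bMax ∈ I_t → T = I_t := by
    intro h
    have hItB : I_t ⊆ B := by
      intro x hx
      rcases hcoverx x with hxA | hxB
      · exact absurd (hbAdj x hxA) (ht h hx)
      · exact hxB
    ext x
    constructor
    · rintro (hx | hx)
      · exact (Set.mem_singleton_iff.mp hx) ▸ h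
      · exact hx.1
    · intro hx
      exact Or.inr ⟨hx, hItB hx⟩
  have haMaxS : aMax ∈ S := Or.inl rfl
  have hbMaxT : bMax ∈ T := Or.inl rfl
  -- connectivity of I_s ∆ S when aMax ∉ I_s
  have hD1c : aMax ∉ I_s → (G.induce (symmDiff I_s S)).Connected := by
    intro h
    apply twoStar_connected G _ aMax aMax
      (Set.mem_symmDiff.mpr (Or.inr ⟨haMaxS, h⟩))
      (Set.mem_symmDiff.mpr (Or.inr ⟨haMaxS, h⟩)) (Or.inl rfl)
    intro x hx
    rcases Set.mem_symmDiff.mp hx with ⟨hxs, hxS⟩ | ⟨hxS, hxs⟩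
    · have hxB : x ∈ B := by
        rcases hcoverx x with hxA | hxB
        · exact absurd (Or.inr ⟨hxs, hxA⟩) hxS
        · exact hxB
      exact Or.inr (Or.inr (Or.inl (haAdj x hxB).symm))
    · rcases hxS with hx1 | hx2
      · exact Or.inl (Set.mem_singleton_iff.mp hx1)
      · exact absurd hx2.1 hxs
  -- connectivity of T ∆ I_t when bMax ∉ I_t
  have hD3c : bMax ∉ I_t → (G.induce (symmDiff T I_t)).Connected := by
    intro h
    apply twoStar_connected G _ bMax bMax
      (Set.mem_symmDiff.mpr (Or.inl ⟨hbMaxT, h⟩))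
      (Set.mem_symmDiff.mpr (Or.inl ⟨hbMaxT, h⟩)) (Or.inl rfl)
    intro x hx
    rcases Set.mem_symmDiff.mp hx with ⟨hxT, hxt⟩ | ⟨hxt, hxT⟩
    · rcases hxT with hx1 | hx2
      · exact Or.inl (Set.mem_singleton_iff.mp hx1)
      · exact absurd hx2.1 hxt
    · have hxA : x ∈ A := by
        rcases hcoverx x with hxA | hxB
        · exact hxA
        · exact absurd (Or.inr ⟨hxt, hxB⟩) hxT
      exact Or.inr (Or.inr (Or.inl (hbAdj x hxA).symm))
  -- connectivity of S ∆ T (always)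
  have haMaxnT : aMax ∉ T := fun h => hne aMax haMax aMax (hTB h) rfl
  have hbMaxnS : bMax ∉ S := fun h => hne bMax (hSA h) bMax hbMax rfl
  have hD2c : (G.induce (symmDiff S T)).Connected := by
    apply twoStar_connected G _ aMax bMax
      (Set.mem_symmDiff.mpr (Or.inl ⟨haMaxS, haMaxnT⟩))
      (Set.mem_symmDiff.mpr (Or.inr ⟨hbMaxT, hbMaxnS⟩))
      (Or.inr (haAdj bMax hbMax))
    intro x hx
    rcases Set.mem_symmDiff.mp hx with ⟨hxS, _⟩ | ⟨hxT, _⟩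
    · exact Or.inr (Or.inr (Or.inr (hbAdj x (hSA hxS)).symm))
    · exact Or.inr (Or.inr (Or.inl (haAdj x (hTB hxT)).symm))
  refine ⟨hSindep, hTindep, ?_, Or.inr hD2c, ?_, ?_⟩
  · by_cases h1 : aMax ∈ I_s
    · exact Or.inl (by rw [hSeq h1, symmDiff_self]; rfl)
    · exact Or.inr (hD1c h1)
  · by_cases h3 : bMax ∈ I_t
    · exact Or.inl (by rw [hTeq h3, symmDiff_self]; rfl)
    · exact Or.inr (hD3c h3)
  · by_cases h1 : aMax ∈ I_s <;> by_cases h3 : bMax ∈ I_t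
    · -- I_s = S, T = I_t : one step
      refine ⟨1, fun n => if n = 0 then I_s else I_t, by norm_num, by simp, by simp, ?_, ?_⟩
      · intro i _
        by_cases hi : i = 0 <;> simp [hi, hs, ht]
      · intro i hi
        interval_cases i
        have h2 := hD2c
        rw [hSeq h1, hTeq h3] at h2
        simpa using h2
    · -- I_s = S : two steps I_s, T, I_t
      refine ⟨2, fun n => if n = 0 then I_s else if n = 1 then T else I_t,
        by norm_num, by simp, by simp, ?_, ?_⟩
      · intro i _
        by_cases hi : i = 0
        · simpa [hi] using hs
        · by_cases hi' : i = 1 <;> simp [hi, hi', hTindep, ht]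
      · intro i hi
        interval_cases i
        · have h2 := hD2c
          rw [hSeq h1] at h2
          simpa using h2
        · simpa using hD3c h3
    · -- T = I_t : two steps I_s, S, I_t
      refine ⟨2, fun n => if n = 0 then I_s else if n = 1 then S else I_t,
        by norm_num, by simp, by simp, ?_, ?_⟩
      · intro i _
        by_cases hi : i = 0
        · simpa [hi] using hs
        · by_cases hi' : i = 1 <;> simp [hi, hi', hSindep, ht]
      · intro i hi
        interval_cases i
        · simpa using hD1c h1
        · have h2 := hD2c
          rw [hTeq h3] at h2
          simpa using h2
    · -- three steps I_s, S, T, I_t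
      refine ⟨3, fun n => if n = 0 then I_s else if n = 1 then S else if n = 2 then T else I_t,
        by norm_num, by simp, by simp, ?_, ?_⟩
      · intro i _
        by_cases hi : i = 0
        · simpa [hi] using hs
        · by_cases hi' : i = 1
          · simpa [hi, hi'] using hSindep
          · by_cases hi'' : i = 2 <;> simp [hi, hi', hi'', hTindep, ht]
      · intro i hi
        interval_cases i
        · simpa using hD1c h1
        · simpa using hD2c
        · simpa using hD3c h3
end

section
/- In the split-graph construction above (with I_s = Y ∪ {z_1}, I_t = {z_2}), suppose σ = ⟨I_s = I_0, I_1, ..., I_{ℓ+1} = I_t⟩ is a reconfiguration sequence with ℓ ≤ k. Then for every i ∈ [n] and j ∈ [k+2], there exists r ∈ [ℓ] such that N(y_{i,j}) ∩ I_r ≠ ∅. -/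
/-- Vertex set of the split graph of the reduction: `X = Fin n` (clique vertices `x_i`),
`Y = Fin n × Fin (k+2)` (independent vertices `y_{i,j}`), and two extra clique vertices
`z₁ = Bool.false`, `z₂ = Bool.true`. -/
abbrev SplitV (n k : ℕ) := Fin n ⊕ ((Fin n × Fin (k + 2)) ⊕ Bool)

/-- The split graph `G'` of the reduction from Dominating Set: `X ∪ {z₁, z₂}` is a clique,
`Y` is independent, and `x_i` is adjacent to every vertex of `Y_j` iff `v_j ∈ N[v_i]`. -/
def splitG {n : ℕ} (G : SimpleGraph (Fin n)) (k : ℕ) : SimpleGraph (SplitV n k) where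
  Adj x y :=
    match x, y with
    | .inl i, .inl j => i ≠ j
    | .inl i, .inr (.inl (j, _)) => j = i ∨ G.Adj i j
    | .inr (.inl (j, _)), .inl i => j = i ∨ G.Adj i j
    | .inl _, .inr (.inr _) => True
    | .inr (.inr _), .inl _ => True
    | .inr (.inr b), .inr (.inr b') => b ≠ b'
    | .inr (.inl _), .inr (.inl _) => False
    | .inr (.inl _), .inr (.inr _) => False
    | .inr (.inr _), .inr (.inl _) => False
  symm := by
    constructor
    rintro (i | ⟨j, m⟩ | b) (i' | ⟨j', m'⟩ | b') h
    · exact h.symm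
    · exact h
    · trivial
    · exact h
    · exact h.elim
    · exact h.elim
    · trivial
    · exact h.elim
    · exact h.symm
  loopless := by
    constructor
    rintro (i | ⟨j, m⟩ | b) h
    · exact h rfl
    · exact h
    · exact h rfl

/-- The independent part `Y` of the split graph. -/
def Yset (n k : ℕ) : Set (SplitV n k) :=
  {x | ∃ p : Fin n × Fin (k + 2), x = Sum.inr (Sum.inl p)}

/-- The vertices `z₁` (for `b = false`) and `z₂` (for `b = true`). -/
def zvert (n k : ℕ) (b : Bool) : SplitV n k := Sum.inr (Sum.inr b)

open Function

theorem Nat.exists_lt_and_not_succ {p : ℕ → Prop} {m : ℕ} (h0 : p 0) (hm : ¬ p m) :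
    ∃ r < m, p r ∧ ¬ p (r + 1) := by
  induction m with
  | zero => exact absurd h0 hm
  | succ m ih =>
    by_cases hpm : p m
    · exact ⟨m, m.lt_succ_self, hpm, hm⟩
    · obtain ⟨r, hr, hstep⟩ := ih hpm
      exact ⟨r, by omega, hstep⟩

namespace SimpleGraph

variable {V : Type*} (H : SimpleGraph V)

theorem eq_singleton_of_induce_connected {S : Set V} (hS : (H.induce S).Connected) {v : V}
    (hv : v ∈ S) (hN : ∀ w ∈ S, ¬ H.Adj v w) : S = {v} := by
  refine Set.Subsingleton.eq_singleton_of_mem (fun a ha b hb => ?_) hv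
  by_contra hab
  have : Nontrivial S := Set.nontrivial_coe_sort.2 ⟨a, ha, b, hb, hab⟩
  obtain ⟨u, hu⟩ := hS.preconnected.exists_adj_of_nontrivial ⟨v, hv⟩
  exact hN u u.2 hu

theorem card_le_of_leave_without_neighbors {ι : Type*} [Fintype ι] (seq : ℕ → Set V) {m : ℕ}
    (hconn : ∀ r < m, (H.induce (symmDiff (seq r) (seq (r + 1)))).Connected)
    (y : ι → V) (hy : Injective y) (h0 : ∀ a, y a ∈ seq 0) (hm : ∀ a, y a ∉ seq m)
    (hN : ∀ a, ∀ r ≤ m, ∀ w ∈ seq r, ¬ H.Adj (y a) w) :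
    Fintype.card ι ≤ m := by
  choose step hstep hin hout using fun a =>
    Nat.exists_lt_and_not_succ (p := fun r => y a ∈ seq r) (h0 a) (hm a)
  have hsingle (a : ι) : symmDiff (seq (step a)) (seq (step a + 1)) = {y a} := by
    refine H.eq_singleton_of_induce_connected (hconn _ (hstep a))
      (Set.mem_symmDiff.2 (Or.inl ⟨hin a, hout a⟩)) fun w hw => ?_
    rcases Set.mem_symmDiff.1 hw with ⟨hw, -⟩ | ⟨hw, -⟩
    · exact hN a _ (hstep a).le w hw
    · exact hN a _ (hstep a) w hw
  have hinj : Injective fun a => (⟨step a, hstep a⟩ : Fin m) := fun a b hab => by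
    have hab : step a = step b := congrArg Fin.val hab
    exact hy (Set.singleton_eq_singleton_iff.1 (by rw [← hsingle a, ← hsingle b, hab]))
  simpa using Fintype.card_le_of_injective _ hinj

end SimpleGraph

theorem splitG_adj_Y_iff {n k : ℕ} (G : SimpleGraph (Fin n)) (p : Fin n × Fin (k + 2))
    (w : SplitV n k) :
    (splitG G k).Adj (Sum.inr (Sum.inl p)) w ↔ ∃ a, w = Sum.inl a ∧ (p.1 = a ∨ G.Adj a p.1) := by
  rcases w with a | q | b <;> simp [splitG]

theorem stmt_15_general {n k ℓ : ℕ} (G : SimpleGraph (Fin n)) (hℓk : ℓ ≤ k)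
    (seq : ℕ → Set (SplitV n k))
    (h0 : seq 0 = Yset n k ∪ {zvert n k false})
    (hlast : seq (ℓ + 1) = {zvert n k true})
    (hconn : ∀ i < ℓ + 1,
      ((splitG G k).induce (symmDiff (seq i) (seq (i + 1)))).Connected) :
    ∀ (i : Fin n) (j : Fin (k + 2)), ∃ r : ℕ, 1 ≤ r ∧ r ≤ ℓ ∧
      ((splitG G k).neighborSet (Sum.inr (Sum.inl (i, j))) ∩ seq r).Nonempty := by
  intro i j
  by_contra! hcon
  let y : Fin (k + 2) → SplitV n k := fun j' => Sum.inr (Sum.inl (i, j'))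
  have hN (j') : ∀ r ≤ ℓ + 1, ∀ w ∈ seq r, ¬ (splitG G k).Adj (y j') w := by
    intro r hr w hw hadj
    obtain ⟨a, rfl, ha⟩ := (splitG_adj_Y_iff G _ w).1 hadj
    rcases Nat.eq_zero_or_pos r with rfl | hr0
    · simp [h0, Yset, zvert] at hw
    rcases hr.lt_or_eq with hrℓ | rfl
    · have hmem : Sum.inl a ∈ (splitG G k).neighborSet (Sum.inr (Sum.inl (i, j))) ∩ seq r :=
        ⟨(splitG_adj_Y_iff G _ _).2 ⟨a, rfl, ha⟩, hw⟩
      simp [hcon r hr0 (by omega)] at hmem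
    · simp [hlast, zvert] at hw
  have hcard := (splitG G k).card_le_of_leave_without_neighbors seq hconn y
    (fun a b hab => by simpa [y] using hab) (fun j' => by simp [h0, Yset, y])
    (fun j' => by simp [hlast, y, zvert]) hN
  simp only [Fintype.card_fin] at hcard
  omega

/-- In any reconfiguration sequence of length `ℓ + 1 ≤ k + 1` from `Y ∪ {z₁}` to `{z₂}`
in the split graph, every vertex `y_{i,j}` has a neighbor in some intermediate set `I_r`
with `r ∈ [ℓ]`. -/
theorem stmt_15 {n k ℓ : ℕ} (G : SimpleGraph (Fin n)) (hℓk : ℓ ≤ k)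
    (seq : ℕ → Set (SplitV n k))
    (h0 : seq 0 = Yset n k ∪ {zvert n k false})
    (hlast : seq (ℓ + 1) = {zvert n k true})
    (hind : ∀ i ≤ ℓ + 1, IsIndep (splitG G k) (seq i))
    (hconn : ∀ i < ℓ + 1,
      ((splitG G k).induce (symmDiff (seq i) (seq (i + 1)))).Connected) :
    ∀ (i : Fin n) (j : Fin (k + 2)), ∃ r : ℕ, 1 ≤ r ∧ r ≤ ℓ ∧
      ((splitG G k).neighborSet (Sum.inr (Sum.inl (i, j))) ∩ seq r).Nonempty :=
  stmt_15_general G hℓk seq h0 hlast hconn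
end

section
/- In the split-graph construction, if ⟨I_s = I_0, ..., I_{ℓ+1} = I_t⟩ is a reconfiguration sequence with I_s = Y ∪ {z_1}, I_t = {z_2}, and ℓ ≤ k, then D = {v_i ∈ V(G) : x_i ∈ I_j \ I_{j−1} for some j ∈ [ℓ]} is a dominating set of G of size at most ℓ ≤ k. -/
/-!
Fix `v`. Each of the `k + 2` vertices `y_{v,m}` lies in `I_0` but not in `I_{ℓ+1}`, so it is
removed at one of the `ℓ + 1 ≤ k + 1` steps, and by pigeonhole two of them are removed at the
same step `I_j → I_{j+1}`. As `I_j ∆ I_{j+1}` induces a connected graph with at least two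
vertices, `y_{v,m}` has a neighbour `x_u` there, so `u ∈ N[v]`; since `I_j` is independent,
`x_u` is added at that step, and `j + 1 ≤ ℓ` because `I_{ℓ+1} = {z₂}`.
For the size bound, `X` is a clique, so each independent `I_j` contains at most one `x_u`;
hence at most `ℓ` vertices of `X` are added in steps `1, …, ℓ`.
-/

open Function

section Reconfiguration

variable {V : Type*} {H : SimpleGraph V}

lemma Nat.exists_lt_and_not_succ_s16 {P : ℕ → Prop} {N : ℕ} (h0 : P 0) (hN : ¬ P N) :
    ∃ j < N, P j ∧ ¬ P (j + 1) := by
  induction N with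
  | zero => exact absurd h0 hN
  | succ N ih =>
    by_cases hPN : P N
    · exact ⟨N, N.lt_succ_self, hPN, hN⟩
    · obtain ⟨j, hj, hPj⟩ := ih hPN
      exact ⟨j, by omega, hPj⟩

lemma IsIndep.subsingleton_inter_of_isClique {I K : Set V} (hI : IsIndep H I)
    (hK : H.IsClique K) : (I ∩ K).Subsingleton := by
  intro a ha b hb
  by_contra hab
  exact hI ha.1 hb.1 (hK ha.2 hb.2 hab)

lemma SimpleGraph.Preconnected.induce_exists_adj {S : Set V} (hS : (H.induce S).Preconnected)
    {y w : V} (hy : y ∈ S) (hw : w ∈ S) (hne : y ≠ w) : ∃ u ∈ S, H.Adj y u := by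
  have : Nontrivial S := Set.nontrivial_coe_sort.mpr ⟨y, hy, w, hw, hne⟩
  obtain ⟨u, hu⟩ := hS.exists_adj_of_nontrivial ⟨y, hy⟩
  exact ⟨u, u.2, hu⟩

lemma IsIndep.exists_adj_mem_diff {I J : Set V} (hI : IsIndep H I)
    (hconn : (H.induce (symmDiff I J)).Preconnected) {y w : V} (hy : y ∈ I \ J)
    (hw : w ∈ symmDiff I J) (hne : y ≠ w) : ∃ u, H.Adj y u ∧ u ∈ J \ I := by
  obtain ⟨u, hu, hyu⟩ := hconn.induce_exists_adj (Set.mem_symmDiff.mpr (.inl hy)) hw hne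
  refine ⟨u, hyu, (Set.mem_symmDiff.mp hu).resolve_left fun huI => ?_⟩
  exact hI hy.1 huI.1 hyu

lemma exists_adj_mem_succ_diff_of_card_lt {ι : Type*} [Fintype ι] {seq : ℕ → Set V} {N : ℕ}
    (y : ι → V) (hy : Injective y) (hN : N < Fintype.card ι) (h0 : ∀ i, y i ∈ seq 0)
    (hleave : ∀ i, y i ∉ seq N) (hind : ∀ j < N, IsIndep H (seq j))
    (hconn : ∀ j < N, (H.induce (symmDiff (seq j) (seq (j + 1)))).Preconnected) :
    ∃ i, ∃ j < N, ∃ u, H.Adj (y i) u ∧ u ∈ seq (j + 1) \ seq j := by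
  choose t ht hleft using fun i => Nat.exists_lt_and_not_succ_s16 (P := (y i ∈ seq ·)) (h0 i) (hleave i)
  obtain ⟨a, -, b, -, hab, htab⟩ := Finset.exists_ne_map_eq_of_card_lt_of_maps_to
    (s := Finset.univ) (t := Finset.range N) (by simpa using hN)
    (f := t) fun i _ => Finset.mem_range.mpr (ht i)
  have hb : y b ∈ symmDiff (seq (t a)) (seq (t a + 1)) :=
    Set.mem_symmDiff.mpr (.inl (htab ▸ hleft b))
  obtain ⟨u, hu⟩ := (hind _ (ht a)).exists_adj_mem_diff (hconn _ (ht a)) (hleft a) hb (hy.ne hab)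
  exact ⟨a, t a, ht a, u, hu⟩

lemma ncard_le_card_of_isClique_range {α ι : Type*} {f : α → V} (hf : Injective f)
    (hK : H.IsClique (Set.range f)) {I : ι → Set V} {T : Finset ι}
    (hI : ∀ j ∈ T, IsIndep H (I j)) : {a | ∃ j ∈ T, f a ∈ I j}.ncard ≤ T.card := by
  rcases isEmpty_or_nonempty ι with hι | hι
  · simp
  choose! g hgT hg using fun a (ha : a ∈ {a | ∃ j ∈ T, f a ∈ I j}) => ha
  calc {a | ∃ j ∈ T, f a ∈ I j}.ncard ≤ (T : Set ι).ncard := by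
        refine Set.ncard_le_ncard_of_injOn g hgT fun a ha b hb hab => hf ?_
        refine (hI _ (hgT a ha)).subsingleton_inter_of_isClique hK ⟨hg a ha, a, rfl⟩ ?_
        exact ⟨hab ▸ hg b hb, b, rfl⟩
    _ = T.card := Set.ncard_coe_finset T

end Reconfiguration

section SplitGraph

variable {n k : ℕ} {G : SimpleGraph (Fin n)}

lemma splitG_isClique_range_inl : (splitG G k).IsClique (Set.range Sum.inl) := by
  rintro _ ⟨i, rfl⟩ _ ⟨j, rfl⟩ hij
  exact fun h => hij (congrArg Sum.inl h)

lemma splitG_adj_inr_inl_iff {v : Fin n} {m : Fin (k + 2)} {w : SplitV n k} :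
    (splitG G k).Adj (Sum.inr (Sum.inl (v, m))) w ↔ ∃ u, w = Sum.inl u ∧ (u = v ∨ G.Adj u v) := by
  rcases w with u | q | b
  · simp only [Sum.inl.injEq, exists_eq_left']
    exact ⟨fun h => h.imp Eq.symm id, fun h => h.imp Eq.symm id⟩
  · exact iff_of_false id (by simp)
  · exact iff_of_false id (by simp)

end SplitGraph

/-- From any reconfiguration sequence of length `ℓ + 1 ≤ k + 1` from `Y ∪ {z₁}` to `{z₂}`
in the split graph, the set `D = {v_i : x_i ∈ I_j \ I_{j-1} for some j ∈ [ℓ]}` is a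
dominating set of `G` of size at most `ℓ ≤ k`. -/
theorem stmt_16 {n k ℓ : ℕ} (G : SimpleGraph (Fin n)) (hℓk : ℓ ≤ k)
    (seq : ℕ → Set (SplitV n k))
    (h0 : seq 0 = Yset n k ∪ {zvert n k false})
    (hlast : seq (ℓ + 1) = {zvert n k true})
    (hind : ∀ i ≤ ℓ + 1, IsIndep (splitG G k) (seq i))
    (hconn : ∀ i < ℓ + 1,
      ((splitG G k).induce (symmDiff (seq i) (seq (i + 1)))).Connected) :
    (∀ v : Fin n, ∃ u : Fin n,
        (∃ j : ℕ, 1 ≤ j ∧ j ≤ ℓ ∧ Sum.inl u ∈ seq j \ seq (j - 1)) ∧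
        (u = v ∨ G.Adj u v)) ∧
    {v : Fin n | ∃ j : ℕ, 1 ≤ j ∧ j ≤ ℓ ∧ Sum.inl v ∈ seq j \ seq (j - 1)}.ncard ≤ ℓ := by
  refine ⟨fun v => ?_, ?_⟩
  · obtain ⟨m, j, hj, w, hadj, hw⟩ := exists_adj_mem_succ_diff_of_card_lt (N := ℓ + 1)
      (fun m => Sum.inr (Sum.inl (v, m))) (fun a b h => by simpa using h)
      (by simp only [Fintype.card_fin]; omega) (fun m => by rw [h0]; exact .inl ⟨_, rfl⟩)
      (fun m => by simp [hlast, zvert]) (fun j hj => hind j hj.le)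
      (fun j hj => (hconn j hj).preconnected)
    obtain ⟨u, rfl, huv⟩ := splitG_adj_inr_inl_iff.mp hadj
    have hjℓ : j + 1 ≤ ℓ := by
      by_contra! h
      rw [show j + 1 = ℓ + 1 by omega, hlast] at hw
      simp [zvert] at hw
    exact ⟨u, ⟨j + 1, by omega, hjℓ, by simpa using hw⟩, huv⟩
  · calc _ ≤ {v : Fin n | ∃ j ∈ Finset.Icc 1 ℓ, Sum.inl v ∈ seq j}.ncard :=
          Set.ncard_le_ncard <| by
            rintro _ ⟨j, hj1, hjℓ, hv, -⟩
            exact ⟨j, Finset.mem_Icc.mpr ⟨hj1, hjℓ⟩, hv⟩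
      _ ≤ (Finset.Icc 1 ℓ).card := ncard_le_card_of_isClique_range Sum.inl_injective
          splitG_isClique_range_inl fun j hj => hind j (by simp at hj; omega)
      _ = ℓ := by simp
end
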